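/- Privacy of the LDP-ASGD (averaged) estimator: let K_1, …, K_n be Markov kernels from ℝ^d × 𝒳 to ℝ^d such that, for every fixed θ ∈ ℝ^d, the kernel x ↦ K_i((θ, x)) satisfies (ε_i, δ_i)-LDP. Fix θ_0 ∈ ℝ^d and let (θ_1, …, θ_n) be the sequential trajectory with θ_i ∼ K_i((θ_{i−1}, x_i)) conditionally on θ_{i−1}, with independent randomness across steps. Then the mechanism M̄_n from 𝒳^n to ℝ^d that outputs the law of the Polyak–Ruppert average θ̄_n = (1/n) Σ_{i=1}^n θ_i satisfies (max_{1≤j≤n} ε_j, max_{1≤j≤n} δ_j)-LDP: for any two inputs differing in exactly one coordinate and any measurable E ⊆ ℝ^d, M̄_n(x_1,…,x_n)(E) ≤ e^{max_j ε_j} · M̄_n(x_1′,…,x_n′)(E) + max_j δ_j. -/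

import Mathlib

/-! Only step `j` sees the changed datum. Up to step `j` both trajectories have the same law;
mixing the `(ε_j, δ_j)`-close kernels of step `j` over that common law keeps the two laws
`(ε_j, δ_j)`-close. Every later step, and the final averaging, is a post-processing by a Markov
kernel, and post-processing preserves an event-wise bound `μ E ≤ e^ε ν E + δ`: by the layer-cake
formula the bound extends to all test functions with values in `[0, 1]`. -/

open MeasureTheory ProbabilityTheory

/-- A mechanism `M` (a map from inputs to output measures) satisfies
`(ε, δ)`-local differential privacy if for every pair of individual inputs
`x, x'` and every measurable event `E`,
`M x E ≤ e^ε * M x' E + δ`. -/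
def IsLDP {𝒳 ℛ : Type*} [MeasurableSpace 𝒳] [MeasurableSpace ℛ]
    (M : 𝒳 → Measure ℛ) (ε δ : ℝ) : Prop :=
  ∀ x x' : 𝒳, ∀ E : Set ℛ, MeasurableSet E →
    M x E ≤ ENNReal.ofReal (Real.exp ε) * M x' E + ENNReal.ofReal δ

/-- Joint law of the pair `(θ_n, θ_1 + ⋯ + θ_n)` for the sequential LDP-SGD
trajectory built from the update kernels `K i : Θ × 𝒳 → Θ` started at `θ₀`
(step `i + 1` updates the current iterate using the datum `x i`), the
randomness of distinct steps being independent.  The second component carries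
the running sum of the iterates. -/
noncomputable def sumTrajLaw {Θ 𝒳 : Type*} [MeasurableSpace Θ] [MeasurableSpace 𝒳]
    [Add Θ] [Zero Θ]
    (K : ℕ → Kernel (Θ × 𝒳) Θ) (θ₀ : Θ) (x : ℕ → 𝒳) : ℕ → Measure (Θ × Θ)
  | 0 => Measure.dirac (θ₀, 0)
  | (i + 1) =>
      (sumTrajLaw K θ₀ x i).bind
        (fun p => (K i (p.1, x i)).map (fun θ => (θ, p.2 + θ)))

/-- The mechanism `M̄_n` outputting the law of the Polyak–Ruppert average
`θ̄_n = (1/n) ∑_{i=1}^n θ_i` of the LDP-SGD trajectory. -/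
noncomputable def avgLaw {d : ℕ} {𝒳 : Type*} [MeasurableSpace 𝒳]
    (K : ℕ → Kernel ((Fin d → ℝ) × 𝒳) (Fin d → ℝ)) (θ₀ : Fin d → ℝ)
    (x : ℕ → 𝒳) (n : ℕ) : Measure (Fin d → ℝ) :=
  (sumTrajLaw K θ₀ x n).map (fun p => (n : ℝ)⁻¹ • p.2)

open scoped ENNReal

section DPClose

variable {α β : Type*} [MeasurableSpace α] [MeasurableSpace β]

/-- `DPClose (e^ε) δ μ ν` is the one-sided `(ε, δ)`-indistinguishability of `μ` from `ν`. -/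
def DPClose (c δ : ℝ≥0∞) (μ ν : Measure α) : Prop :=
  ∀ E : Set α, MeasurableSet E → μ E ≤ c * ν E + δ

theorem IsLDP.dpClose {𝒳 : Type*} [MeasurableSpace 𝒳] {M : 𝒳 → Measure α} {ε δ : ℝ}
    (h : IsLDP M ε δ) (y y' : 𝒳) :
    DPClose (ENNReal.ofReal (Real.exp ε)) (ENNReal.ofReal δ) (M y) (M y') :=
  h y y'

theorem DPClose.mono {c c' δ δ' : ℝ≥0∞} {μ ν : Measure α} (h : DPClose c δ μ ν)
    (hc : c ≤ c') (hδ : δ ≤ δ') : DPClose c' δ' μ ν :=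
  fun E hE => (h E hE).trans (by gcongr)

theorem DPClose.map {c δ : ℝ≥0∞} {μ ν : Measure α} (h : DPClose c δ μ ν) {g : α → β}
    (hg : Measurable g) : DPClose c δ (μ.map g) (ν.map g) := by
  intro E hE
  rw [Measure.map_apply hg hE, Measure.map_apply hg hE]
  exact h _ (hg hE)

theorem lintegral_eq_setLIntegral_Ioc_meas_le (ν : Measure α) {h : α → ℝ≥0∞}
    (hm : Measurable h) (h1 : ∀ a, h a ≤ 1) :
    ∫⁻ a, h a ∂ν = ∫⁻ t in Set.Ioc (0 : ℝ) 1, ν {a | t ≤ (h a).toReal} := by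
  have h_ofReal : ∀ a, ENNReal.ofReal (h a).toReal = h a :=
    fun a => ENNReal.ofReal_toReal ((h1 a).trans_lt ENNReal.one_lt_top).ne
  have h_empty : ∀ t ∈ Set.Ioi (1 : ℝ), {a | t ≤ (h a).toReal} = ∅ := fun t ht => by
    ext a
    simpa using (ENNReal.toReal_le_of_le_ofReal zero_le_one (by simpa using h1 a)).trans_lt ht
  calc ∫⁻ a, h a ∂ν = ∫⁻ t in Set.Ioi (0 : ℝ), ν {a | t ≤ (h a).toReal} := by
        simp_rw [← lintegral_eq_lintegral_meas_le ν (.of_forall fun a => ENNReal.toReal_nonneg)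
          hm.ennreal_toReal.aemeasurable, h_ofReal]
    _ = ∫⁻ t in Set.Ioc (0 : ℝ) 1, ν {a | t ≤ (h a).toReal} := by
        rw [← Set.Ioc_union_Ioi_eq_Ioi zero_le_one,
          lintegral_union measurableSet_Ioi (Set.Ioc_disjoint_Ioi le_rfl),
          setLIntegral_congr_fun measurableSet_Ioi (fun t ht => by rw [h_empty t ht]),
          measure_empty, lintegral_zero, add_zero]

theorem DPClose.lintegral_le {c δ : ℝ≥0∞} {μ ν : Measure α} (hμν : DPClose c δ μ ν)
    {h : α → ℝ≥0∞} (hm : Measurable h) (h1 : ∀ a, h a ≤ 1) :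
    ∫⁻ a, h a ∂μ ≤ c * ∫⁻ a, h a ∂ν + δ := by
  have h_level : ∀ t : ℝ, MeasurableSet {a | t ≤ (h a).toReal} :=
    fun t => measurableSet_le measurable_const hm.ennreal_toReal
  have h_anti : Measurable fun t : ℝ => ν {a | t ≤ (h a).toReal} :=
    Antitone.measurable fun s t hst => measure_mono fun a ha => hst.trans ha
  calc ∫⁻ a, h a ∂μ = ∫⁻ t in Set.Ioc (0 : ℝ) 1, μ {a | t ≤ (h a).toReal} :=
        lintegral_eq_setLIntegral_Ioc_meas_le μ hm h1
    _ ≤ ∫⁻ t in Set.Ioc (0 : ℝ) 1, (c * ν {a | t ≤ (h a).toReal} + δ) :=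
        lintegral_mono fun t => hμν _ (h_level t)
    _ = c * ∫⁻ a, h a ∂ν + δ := by
        rw [lintegral_add_right _ measurable_const, lintegral_const_mul _ h_anti,
          setLIntegral_const, Real.volume_Ioc, lintegral_eq_setLIntegral_Ioc_meas_le ν hm h1]
        norm_num

theorem DPClose.bind {c δ : ℝ≥0∞} {μ ν : Measure α} (hμν : DPClose c δ μ ν)
    {f : α → Measure β} (hf : Measurable f) (hf1 : ∀ a, IsProbabilityMeasure (f a)) :
    DPClose c δ (μ.bind f) (ν.bind f) := by
  intro E hE
  rw [Measure.bind_apply hE hf.aemeasurable, Measure.bind_apply hE hf.aemeasurable]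
  exact hμν.lintegral_le (Measure.measurable_coe hE |>.comp hf) fun a => prob_le_one

theorem dpClose_bind_of_forall {c δ : ℝ≥0∞} (μ : Measure α) [IsProbabilityMeasure μ]
    {f g : α → Measure β} (hf : Measurable f) (hg : Measurable g)
    (hfg : ∀ a, DPClose c δ (f a) (g a)) : DPClose c δ (μ.bind f) (μ.bind g) := by
  intro E hE
  have hgE : Measurable fun a => g a E := Measure.measurable_coe hE |>.comp hg
  calc μ.bind f E = ∫⁻ a, f a E ∂μ := Measure.bind_apply hE hf.aemeasurable
    _ ≤ ∫⁻ a, (c * g a E + δ) ∂μ := lintegral_mono fun a => hfg a E hE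
    _ = c * μ.bind g E + δ := by
        rw [lintegral_add_right _ measurable_const, lintegral_const_mul _ hgE, lintegral_const,
          measure_univ, mul_one, Measure.bind_apply hE hg.aemeasurable]

end DPClose

section SumTrajectory

variable {Θ 𝒳 : Type*} [MeasurableSpace Θ] [MeasurableSpace 𝒳] [Add Θ]
  [MeasurableAdd₂ Θ]

omit [MeasurableAdd₂ Θ] in
noncomputable def sumStep (κ : Kernel (Θ × 𝒳) Θ) (y : 𝒳) (p : Θ × Θ) : Measure (Θ × Θ) :=
  (κ (p.1, y)).map fun θ => (θ, p.2 + θ)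

omit [MeasurableSpace 𝒳] in
theorem measurable_appendSum (s : Θ) : Measurable fun θ : Θ => (θ, s + θ) :=
  measurable_id.prodMk (measurable_const.add measurable_id)

theorem measurable_sumStep (κ : Kernel (Θ × 𝒳) Θ) [IsSFiniteKernel κ] (y : 𝒳) :
    Measurable (sumStep κ y) := by
  refine Measure.measurable_of_measurable_coe _ fun E hE => ?_
  have h_next : Measurable fun q : (Θ × Θ) × Θ => (q.2, q.1.2 + q.2) :=
    measurable_snd.prodMk (measurable_fst.snd.add measurable_snd)
  simpa [sumStep, Measure.map_apply (measurable_appendSum _) hE, Kernel.comap_apply,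
    Set.preimage] using Kernel.measurable_kernel_prodMk_left
      (κ := κ.comap (fun p : Θ × Θ => (p.1, y)) (measurable_fst.prodMk measurable_const))
      (h_next hE)

theorem isProbabilityMeasure_sumStep (κ : Kernel (Θ × 𝒳) Θ) [IsMarkovKernel κ] (y : 𝒳)
    (p : Θ × Θ) : IsProbabilityMeasure (sumStep κ y p) :=
  Measure.isProbabilityMeasure_map (measurable_appendSum _).aemeasurable

theorem DPClose.sumStep {c δ : ℝ≥0∞} {κ : Kernel (Θ × 𝒳) Θ} {y y' : 𝒳} {p : Θ × Θ}
    (h : DPClose c δ (κ (p.1, y)) (κ (p.1, y'))) :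
    DPClose c δ (sumStep κ y p) (sumStep κ y' p) :=
  h.map (measurable_appendSum _)

variable [Zero Θ] (K : ℕ → Kernel (Θ × 𝒳) Θ) (θ₀ : Θ)

omit [MeasurableAdd₂ Θ] in
theorem sumTrajLaw_succ (x : ℕ → 𝒳) (i : ℕ) :
    sumTrajLaw K θ₀ x (i + 1) = (sumTrajLaw K θ₀ x i).bind (sumStep (K i) (x i)) :=
  rfl

omit [MeasurableAdd₂ Θ] in
theorem sumTrajLaw_congr {x x' : ℕ → 𝒳} {m : ℕ} (h : ∀ i < m, x i = x' i) :
    sumTrajLaw K θ₀ x m = sumTrajLaw K θ₀ x' m := by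
  induction m with
  | zero => rfl
  | succ m ih =>
    rw [sumTrajLaw_succ, sumTrajLaw_succ, ih fun i hi => h i (by omega), h m m.lt_succ_self]

theorem isProbabilityMeasure_sumTrajLaw [∀ i, IsMarkovKernel (K i)] (x : ℕ → 𝒳) :
    ∀ m, IsProbabilityMeasure (sumTrajLaw K θ₀ x m)
  | 0 => Measure.dirac.isProbabilityMeasure
  | m + 1 =>
    have := isProbabilityMeasure_sumTrajLaw x m
    isProbabilityMeasure_bind (measurable_sumStep _ _).aemeasurable
      (.of_forall (isProbabilityMeasure_sumStep _ _))

theorem dpClose_sumTrajLaw [∀ i, IsMarkovKernel (K i)] {c δ : ℝ≥0∞} {x x' : ℕ → 𝒳}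
    {j m : ℕ} (hjm : j < m) (hstep : ∀ θ, DPClose c δ (K j (θ, x j)) (K j (θ, x' j)))
    (hsame : ∀ i < m, i ≠ j → x i = x' i) :
    DPClose c δ (sumTrajLaw K θ₀ x m) (sumTrajLaw K θ₀ x' m) := by
  have := isProbabilityMeasure_sumTrajLaw K θ₀ x'
  induction m, hjm using Nat.le_induction with
  | base =>
    rw [sumTrajLaw_succ, sumTrajLaw_succ,
      sumTrajLaw_congr K θ₀ fun i hi => hsame i (by omega) (by omega)]
    exact dpClose_bind_of_forall _ (measurable_sumStep _ _) (measurable_sumStep _ _)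
      fun p => (hstep p.1).sumStep
  | succ m hjm ih =>
    rw [sumTrajLaw_succ, sumTrajLaw_succ, hsame m (by omega) (by omega)]
    exact (ih fun i hi hij => hsame i (by omega) hij).bind (measurable_sumStep _ _)
      (isProbabilityMeasure_sumStep _ _)

end SumTrajectory

theorem ldp_asgd_privacy_general {d n : ℕ} {𝒳 : Type*} [MeasurableSpace 𝒳]
    (K : ℕ → Kernel ((Fin d → ℝ) × 𝒳) (Fin d → ℝ)) [∀ i, IsMarkovKernel (K i)]
    (ε δ : ℕ → ℝ)
    (hLDP : ∀ i, i < n → ∀ θ : Fin d → ℝ, IsLDP (fun x => K i (θ, x)) (ε i) (δ i))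
    (θ₀ : Fin d → ℝ) (x x' : ℕ → 𝒳) (j : ℕ) (hj : j < n)
    (hsame : ∀ i, i < n → i ≠ j → x i = x' i)
    (E : Set (Fin d → ℝ)) (hE : MeasurableSet E) :
    avgLaw K θ₀ x n E ≤
      ENNReal.ofReal (Real.exp (⨆ i : Fin n, ε i)) * avgLaw K θ₀ x' n E
        + ENNReal.ofReal (⨆ i : Fin n, δ i) := by
  have h_traj := dpClose_sumTrajLaw K θ₀ hj (fun θ => (hLDP j hj θ).dpClose (x j) (x' j)) hsame
  have h_avg := h_traj.map (measurable_snd.const_smul (n : ℝ)⁻¹)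
  have le_iSup_fin : ∀ f : ℕ → ℝ, f j ≤ ⨆ i : Fin n, f i := fun f =>
    le_ciSup (f := fun i : Fin n => f i) (Set.finite_range _).bddAbove ⟨j, hj⟩
  refine h_avg.mono ?_ ?_ E hE <;> gcongr <;> apply le_iSup_fin

/-- **Privacy of the LDP-ASGD (averaged) estimator.**
If for every fixed current iterate `θ` the update kernel `x ↦ K i (θ, x)` of
step `i + 1` satisfies `(ε i, δ i)`-LDP, then the mechanism outputting the law
of the Polyak–Ruppert average `θ̄_n = (1/n) ∑_{i=1}^n θ_i` of the LDP-SGD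
trajectory satisfies `(max_j ε j, max_j δ j)`-LDP: for any two inputs differing
in exactly one coordinate and any measurable `E ⊆ ℝ^d`,
`M̄_n(x)(E) ≤ e^{max_j ε j} · M̄_n(x')(E) + max_j δ j`. -/
theorem ldp_asgd_privacy {d n : ℕ} {𝒳 : Type*} [MeasurableSpace 𝒳]
    (K : ℕ → Kernel ((Fin d → ℝ) × 𝒳) (Fin d → ℝ)) [∀ i, IsMarkovKernel (K i)]
    (ε δ : ℕ → ℝ)
    (hLDP : ∀ i, i < n → ∀ θ : Fin d → ℝ, IsLDP (fun x => K i (θ, x)) (ε i) (δ i))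
    (θ₀ : Fin d → ℝ) (x x' : ℕ → 𝒳) (j : ℕ) (hj : j < n)
    (hdiff : x j ≠ x' j) (hsame : ∀ i, i < n → i ≠ j → x i = x' i)
    (E : Set (Fin d → ℝ)) (hE : MeasurableSet E) :
    avgLaw K θ₀ x n E ≤
      ENNReal.ofReal (Real.exp (⨆ i : Fin n, ε i)) * avgLaw K θ₀ x' n E
        + ENNReal.ofReal (⨆ i : Fin n, δ i) :=
  ldp_asgd_privacy_general K ε δ hLDP θ₀ x x' j hj hsame E hE
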